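/- arXiv:1302.6038 — 6 statements merged into one kernel-verified Lean document; each statement's English description precedes it below -/
import Mathlib

section
/- Let K be a field of characteristic p > 0 and let a ∈ K. For the Artin–Schreier polynomial f(X) = X^p − X − a ∈ K[X]: if f has a root α in K, then all p roots of f lie in K (indeed the roots are exactly α + j for j ranging over the prime field 𝔽_p, so f splits into distinct linear factors over K); and if f has no root in K, then f is irreducible over K. -/
/-!
If `α` is a root of `X ^ p - X - a`, then substituting `X ↦ X - α` turns it into `X ^ p - X`,
whose roots are the elements of the prime field, so the roots are the translates `α + j`.
If there is no root in `K`, let `q` be a monic factor of degree `d` with `0 < d < p` and `β` a root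
of `q` in a splitting field. The roots of `q` are of the form `β + jᵢ`, so the sum of its roots,
which is `-q.nextCoeff ∈ K`, equals `d • β` plus an element of the prime field. As `d` is invertible,
`β` lies in `K`, a contradiction.
-/

open Polynomial

namespace ArtinSchreier

theorem natDegree_X_pow_sub_X_sub_C {K : Type*} [Field K] {n : ℕ} (hn : 1 < n) (a : K) :
    (X ^ n - X - C a : K[X]).natDegree = n := by
  rw [natDegree_sub_C, FiniteField.X_pow_card_sub_X_natDegree_eq K hn]

variable (p : ℕ) [hp : Fact p.Prime]

theorem X_pow_sub_X_eq_prod_zmod : (X ^ p - X : (ZMod p)[X]) = ∏ j : ZMod p, (X - C j) := by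
  have hroots := FiniteField.roots_X_pow_card_sub_X (ZMod p)
  rw [ZMod.card p] at hroots
  have hmonic : (X ^ p - X : (ZMod p)[X]).Monic :=
    monic_X_pow_sub (by rw [degree_X]; exact_mod_cast hp.out.one_lt)
  rw [(GaloisField.splits_zmod_X_pow_sub_X (p := p)).eq_prod_roots_of_monic hmonic, hroots]
  rfl

variable {K : Type*} [Field K] [CharP K p]

theorem X_pow_sub_X_eq_prod : (X ^ p - X : K[X]) = ∏ j : ZMod p, (X - C (j.val : K)) := by
  simpa [Polynomial.map_prod, ZMod.natCast_val] using
    congrArg (map (ZMod.castHom dvd_rfl K)) (X_pow_sub_X_eq_prod_zmod p)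

theorem natCast_val_injective : Function.Injective (fun j : ZMod p => (j.val : K)) := by
  intro i j h
  exact (ZMod.castHom dvd_rfl K).injective (by simpa [ZMod.natCast_val] using h)

theorem X_pow_sub_X_sub_C_eq_prod {a α : K} (hα : (X ^ p - X - C a : K[X]).eval α = 0) :
    (X ^ p - X - C a : K[X]) = ∏ j : ZMod p, (X - C (α + (j.val : K))) := by
  have ha : a = α ^ p - α := by
    simp only [eval_sub, eval_pow, eval_X, eval_C] at hα
    linear_combination -hα
  have hcomp : (X ^ p - X - C a : K[X]) = (X ^ p - X : K[X]).comp (X - C α) := by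
    rw [sub_comp, pow_comp, X_comp, sub_pow_char, ha, C_sub, C_pow]
    ring
  rw [hcomp, X_pow_sub_X_eq_prod p, prod_comp]
  refine Finset.prod_congr rfl fun j _ => ?_
  rw [sub_comp, X_comp, C_comp, C_add]
  ring

theorem eval_X_pow_sub_X_sub_C_eq_zero_iff {a α : K} (hα : (X ^ p - X - C a : K[X]).eval α = 0)
    (x : K) : (X ^ p - X - C a : K[X]).eval x = 0 ↔ ∃ j : ZMod p, x = α + (j.val : K) := by
  simp only [X_pow_sub_X_sub_C_eq_prod p hα, eval_prod, Finset.prod_eq_zero_iff, Finset.mem_univ,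
    true_and, eval_sub, eval_X, eval_C, sub_eq_zero]

theorem exists_eval_eq_zero_of_monic_dvd {a : K} {q : K[X]} (hq : q.Monic)
    (hdvd : q ∣ X ^ p - X - C a) (hdeg : ¬ p ∣ q.natDegree) :
    ∃ c : K, (X ^ p - X - C a : K[X]).eval c = 0 := by
  let i := algebraMap K q.SplittingField
  let R := i.fieldRange
  have : CharP q.SplittingField p := charP_of_injective_algebraMap i.injective p
  have hsplits : Splits (q.map i) := SplittingField.splits q
  have hdvd' : q.map i ∣ X ^ p - X - C (i a) := by
    simpa [Polynomial.map_sub] using Polynomial.map_dvd i hdvd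
  obtain ⟨β, hβ⟩ := hsplits.exists_eval_eq_zero (by
    rw [degree_map, degree_eq_natDegree hq.ne_zero, Ne, Nat.cast_eq_zero]
    exact fun h => hdeg (h ▸ dvd_zero p))
  have hβ' := eval_eq_zero_of_dvd_of_eval_eq_zero hdvd' hβ
  have hdiff : ∀ r ∈ (q.map i).roots, r - β ∈ R := by
    intro r hr
    obtain ⟨j, rfl⟩ := (eval_X_pow_sub_X_sub_C_eq_zero_iff p hβ' r).mp
      (eval_eq_zero_of_dvd_of_eval_eq_zero hdvd' (isRoot_of_mem_roots hr))
    exact ⟨j.val, by rw [map_natCast, add_sub_cancel_left]⟩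
  have hsum : (q.map i).roots.sum ∈ R := by
    rw [← neg_neg (q.map i).roots.sum, ← hsplits.nextCoeff_eq_neg_sum_roots_of_monic (hq.map i),
      nextCoeff_map i.injective]
    exact ⟨-q.nextCoeff, by simp⟩
  have hdβ : (q.natDegree : q.SplittingField) * β ∈ R := by
    have : (q.natDegree : q.SplittingField) * β =
        (q.map i).roots.sum - ((q.map i).roots.map (· - β)).sum := by
      rw [Multiset.sum_map_sub, Multiset.map_id', Multiset.map_const', Multiset.sum_replicate,
        splits_iff_card_roots.mp hsplits, natDegree_map, nsmul_eq_mul]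
      ring
    rw [this]
    exact R.sub_mem hsum (R.multiset_sum_mem _ fun x hx => by
      obtain ⟨r, hr, rfl⟩ := Multiset.mem_map.mp hx
      exact hdiff r hr)
  have hd : (q.natDegree : q.SplittingField) ≠ 0 := by
    rwa [Ne, CharP.cast_eq_zero_iff _ p]
  obtain ⟨c, hc⟩ : β ∈ R := by
    simpa [hd] using R.mul_mem (R.inv_mem (natCast_mem R q.natDegree)) hdβ
  refine ⟨c, i.injective ?_⟩
  simpa [hc] using hβ'

theorem irreducible_of_forall_eval_ne_zero {a : K}
    (h : ∀ c : K, (X ^ p - X - C a : K[X]).eval c ≠ 0) : Irreducible (X ^ p - X - C a : K[X]) := by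
  have hdeg := natDegree_X_pow_sub_X_sub_C hp.out.one_lt a
  have hpos : 0 < (X ^ p - X - C a : K[X]).natDegree := by
    rw [hdeg]; exact hp.out.pos
  rw [irreducible_iff_lt_natDegree_lt (ne_zero_of_natDegree_gt hpos)
    (not_isUnit_of_natDegree_pos _ hpos)]
  intro q hq hqdeg hdvd
  rw [Finset.mem_Ioc, hdeg] at hqdeg
  obtain ⟨c, hc⟩ := exists_eval_eq_zero_of_monic_dvd p hq hdvd <|
    Nat.not_dvd_of_pos_of_lt hqdeg.1 (hqdeg.2.trans_lt (Nat.div_lt_self hp.out.pos one_lt_two))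
  exact h c hc

end ArtinSchreier

open ArtinSchreier in
/-- **Artin–Schreier polynomials: split or irreducible.**
Let `K` be a field of characteristic `p > 0` and `a ∈ K`.  For the Artin–Schreier
polynomial `f = X^p - X - a`:  if `f` has a root `α ∈ K`, then all `p` roots of `f`
lie in `K`; indeed the roots are exactly `α + j` for `j` in the prime field `𝔽_p`,
and `f` splits into distinct linear factors over `K`.  If `f` has no root in `K`,
then `f` is irreducible over `K`. -/
theorem artin_schreier_root_or_irreducible
    {K : Type*} [Field K] (p : ℕ) [hp : Fact p.Prime] [CharP K p] (a : K)
    (f : K[X]) (hf : f = X ^ p - X - C a) :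
    (∀ α : K, f.eval α = 0 →
      (∀ x : K, f.eval x = 0 ↔ ∃ j : ZMod p, x = α + (j.val : K)) ∧
      Function.Injective (fun j : ZMod p => α + (j.val : K)) ∧
      f = ∏ j : ZMod p, (X - C (α + (j.val : K)))) ∧
    ((¬ ∃ α : K, f.eval α = 0) → Irreducible f) := by
  subst hf
  refine ⟨fun α hα => ⟨eval_X_pow_sub_X_sub_C_eq_zero_iff p hα,
    (add_right_injective α).comp (natCast_val_injective p), X_pow_sub_X_sub_C_eq_prod p hα⟩,
    fun hno => irreducible_of_forall_eval_ne_zero p fun c hc => hno ⟨c, hc⟩⟩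
end

section
/- Let K be a field of characteristic p > 0, let a ∈ K, and suppose the Artin–Schreier polynomial X^p − X − a is irreducible over K. If L is an extension of K generated by a root α of X^p − X − a (i.e. α^p − α = a and L = K(α)), then L/K is a Galois extension of degree p whose Galois group is cyclic of order p (isomorphic to ℤ/pℤ). -/
open Polynomial IntermediateField

/-! Frobenius is additive and fixes `𝔽_p`, so with `α` every `α + i`, `i ∈ 𝔽_p`, is a root of
`f = X^p - X - a`; these `p` distinct roots make `f` split in `L = K(α)`. As `f' = -1`, `f` is
separable, so `L` is the splitting field of a separable polynomial, hence Galois, of degree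
`deg f = p`. A group of prime order `p` is cyclic, isomorphic to `ℤ/pℤ`. -/

section ArtinSchreierPolynomial

variable {R : Type*} [CommRing R]

theorem degree_X_add_C_le (a : R) : (X + C a).degree ≤ 1 :=
  (degree_add_le _ _).trans (max_le degree_X_le (degree_C_le.trans zero_le_one))

theorem monic_X_pow_sub_X_sub_C {n : ℕ} (hn : 1 < n) (a : R) : (X ^ n - X - C a : R[X]).Monic := by
  rw [sub_sub]
  exact monic_X_pow_sub ((degree_X_add_C_le a).trans_lt (by exact_mod_cast hn))

theorem natDegree_X_pow_sub_X_sub_C [Nontrivial R] {n : ℕ} (hn : 1 < n) (a : R) :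
    (X ^ n - X - C a : R[X]).natDegree = n := by
  rw [sub_sub, natDegree_sub_eq_left_of_natDegree_lt] <;> rw [natDegree_X_pow]
  exact (natDegree_le_of_degree_le (degree_X_add_C_le a)).trans_lt hn

theorem separable_X_pow_sub_X_sub_C (p : ℕ) [CharP R p] {n : ℕ} (hpn : p ∣ n) (a : R) :
    (X ^ n - X - C a : R[X]).Separable := by
  have hder : derivative (X ^ n - X - C a : R[X]) = -1 := by
    rw [← CharP.cast_eq_zero_iff R p] at hpn
    simp [derivative_X_pow, hpn]
  exact ⟨1, X ^ n - X - C a - 1, by rw [hder]; ring⟩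

end ArtinSchreierPolynomial

theorem add_pow_char_sub_add_of_pow_eq_self {S : Type*} [CommRing S] (p : ℕ) [Fact p.Prime]
    [CharP S p] (β : S) {c : S} (hc : c ^ p = c) : (β + c) ^ p - (β + c) = β ^ p - β := by
  rw [add_pow_char, hc]
  ring

theorem splits_X_pow_sub_X_sub_C_of_pow_sub_self_eq {L : Type*} [Field L] (p : ℕ) [Fact p.Prime]
    [CharP L p] {β b : L} (hβ : β ^ p - β = b) : (X ^ p - X - C b : L[X]).Splits := by
  classical
  set f : L[X] := X ^ p - X - C b
  have hp : 1 < p := Fact.out (p := p.Prime) |>.one_lt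
  let ψ : ZMod p →+* L := ZMod.castHom dvd_rfl L
  let root : ZMod p ↪ L := ⟨fun i ↦ β + ψ i, (add_right_injective β).comp ψ.injective⟩
  have hroots : Finset.univ.map root ⊆ f.roots.toFinset := by
    intro x hx
    obtain ⟨i, -, rfl⟩ := Finset.mem_map.mp hx
    have hψ : ψ i ^ p = ψ i := by rw [← map_pow, ZMod.pow_card]
    rw [Multiset.mem_toFinset, mem_roots (monic_X_pow_sub_X_sub_C hp b).ne_zero]
    simp [add_pow_char_sub_add_of_pow_eq_self p β hψ, hβ, root]
  rw [splits_iff_card_roots, natDegree_X_pow_sub_X_sub_C hp]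
  refine le_antisymm ((card_roots' f).trans (natDegree_X_pow_sub_X_sub_C hp b).le) ?_
  calc p = (Finset.univ.map root).card := by simp
    _ ≤ f.roots.toFinset.card := Finset.card_le_card hroots
    _ ≤ f.roots.card := Multiset.toFinset_card_le _

theorem isSplittingField_of_adjoin_eq_top {K L : Type*} [Field K] [Field L] [Algebra K L]
    {f : K[X]} (hf : f ≠ 0) {α : L} (hα : aeval α f = 0)
    (hgen : adjoin K ({α} : Set L) = ⊤) (hsplits : (f.map (algebraMap K L)).Splits) :
    IsSplittingField K L f := by
  refine isSplittingField_iff_intermediateField.mpr ⟨hsplits, top_le_iff.mp ?_⟩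
  rw [← hgen]
  exact adjoin.mono _ _ _ (Set.singleton_subset_iff.mpr ((mem_rootSet_of_ne hf).mpr hα))

/-- **Artin–Schreier extensions are cyclic of degree `p`.**
Let `K` be a field of characteristic `p > 0`, `a ∈ K`, and suppose the Artin–Schreier
polynomial `X^p - X - a` is irreducible over `K`.  If `L/K` is an extension generated by a
root `α` of `X^p - X - a` (i.e. `α^p - α = a` and `L = K(α)`), then `L/K` is Galois of
degree `p` with cyclic Galois group of order `p` (isomorphic to `ℤ/pℤ`). -/
theorem artin_schreier_extension_cyclic_of_degree_p
    {K L : Type*} [Field K] [Field L] [Algebra K L]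
    (p : ℕ) [hp : Fact p.Prime] [CharP K p] (a : K)
    (hirr : Irreducible ((X : K[X]) ^ p - X - C a))
    (α : L) (hα : α ^ p - α = algebraMap K L a)
    (hgen : IntermediateField.adjoin K ({α} : Set L) = ⊤) :
    IsGalois K L ∧ Module.finrank K L = p ∧
      IsCyclic (L ≃ₐ[K] L) ∧ Nat.card (L ≃ₐ[K] L) = p ∧
      Nonempty ((L ≃ₐ[K] L) ≃* Multiplicative (ZMod p)) := by
  have : CharP L p := charP_of_injective_algebraMap (algebraMap K L).injective p
  set f : K[X] := X ^ p - X - C a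
  have hmonic : f.Monic := monic_X_pow_sub_X_sub_C hp.out.one_lt a
  have hroot : aeval α f = 0 := by simp [f, hα]
  have hmin : minpoly K α = f := (minpoly.eq_of_irreducible_of_monic hirr hroot hmonic).symm
  have hfinrank : Module.finrank K L = p := by
    rw [← finrank_top', ← hgen, adjoin.finrank ⟨f, hmonic, hroot⟩, hmin,
      natDegree_X_pow_sub_X_sub_C hp.out.one_lt]
  have hsplits : (f.map (algebraMap K L)).Splits := by
    simpa [f] using splits_X_pow_sub_X_sub_C_of_pow_sub_self_eq p hα
  have := isSplittingField_of_adjoin_eq_top hmonic.ne_zero hroot hgen hsplits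
  have := IsSplittingField.finiteDimensional L f
  have hgal : IsGalois K L := IsGalois.of_separable_splitting_field
    (separable_X_pow_sub_X_sub_C p dvd_rfl a)
  have hcard : Nat.card (L ≃ₐ[K] L) = p := by
    rw [IsGalois.card_aut_eq_finrank, hfinrank]
  exact ⟨hgal, hfinrank, isCyclic_of_prime_card hcard, hcard,
    ⟨mulEquivOfPrimeCardEq hcard (Nat.card_zmod p)⟩⟩
end

section
/- Let K be a field of characteristic p > 0 and let L/K be a finite Galois extension of degree p (hence cyclic). Then there exist a ∈ K and α ∈ L with α^p − α = a and L = K(α); that is, every degree-p cyclic extension of K is an Artin–Schreier extension K(℘^{-1}(a)) for some a ∈ K. -/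
/-!
Let `σ` generate the cyclic group `Gal(L/K)` of order `p`. Since `Tr(1) = p = 0`, additive
Hilbert 90 gives `α` with `σ α = α + 1`. Then `σ (α^p - α) = (α + 1)^p - (α + 1) = α^p - α`, so
`a := α^p - α` lies in `K`, while `α ∉ K`; as `[L : K]` is prime, `K(α) = L`.
-/

open IntermediateField Module

section

variable {K L : Type*} [Field K] [Field L] [Algebra K L]

theorem IntermediateField.adjoin_simple_eq_top_of_finrank_prime
    (hprime : (finrank K L).Prime) {α : L} (hα : α ∉ (⊥ : IntermediateField K L)) :
    K⟮α⟯ = ⊤ :=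
  have := isSimpleOrder_of_finrank_prime K L hprime
  (eq_bot_or_eq_top K⟮α⟯).resolve_left (adjoin_simple_eq_bot_iff.not.mpr hα)

namespace IsGalois

variable [FiniteDimensional K L] [IsGalois K L] {σ : Gal(L/K)}

theorem mem_bot_iff_apply_eq_self_of_forall_mem_zpowers
    (hσ : ∀ τ, τ ∈ Subgroup.zpowers σ) (x : L) :
    x ∈ (⊥ : IntermediateField K L) ↔ σ x = x := by
  refine ⟨fun hx ↦ (mem_bot_iff_fixed x).mp hx σ, fun hx ↦ (mem_bot_iff_fixed x).mpr fun τ ↦ ?_⟩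
  have : Subgroup.zpowers σ ≤ MulAction.stabilizer Gal(L/K) x := Subgroup.zpowers_le.mpr hx
  exact this (hσ τ)

/-- Additive Hilbert 90 for cyclic extensions. The image of `σ - 1` lies in `ker Tr`, and both
have codimension one: the kernel of `σ - 1` is `K`, and `Tr` is surjective. -/
theorem exists_apply_sub_self_eq_of_trace_eq_zero
    (hσ : ∀ τ, τ ∈ Subgroup.zpowers σ) {x : L} (hx : Algebra.trace K L x = 0) :
    ∃ y, σ y - y = x := by
  set f : L →ₗ[K] L := σ.toLinearMap - LinearMap.id
  have hrange : LinearMap.range f ≤ LinearMap.ker (Algebra.trace K L) := by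
    rintro _ ⟨y, rfl⟩
    simp [f, Algebra.trace_eq_of_algEquiv]
  have hker : finrank K (LinearMap.ker f) ≤ 1 := by
    refine (Submodule.finrank_mono fun y hy ↦ ?_).trans
      ((LinearMap.finrank_range_le (Algebra.linearMap K L)).trans (finrank_self K).le)
    exact mem_bot.mp ((mem_bot_iff_apply_eq_self_of_forall_mem_zpowers hσ y).mpr (sub_eq_zero.mp hy))
  have htrace : finrank K (LinearMap.ker (Algebra.trace K L)) + 1 = finrank K L := by
    rw [← LinearMap.finrank_range_add_finrank_ker (Algebra.trace K L),
      LinearMap.range_eq_top.mpr (Algebra.trace_surjective K L), finrank_top, finrank_self,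
      add_comm]
  have := LinearMap.finrank_range_add_finrank_ker f
  exact (Submodule.eq_of_le_of_finrank_le hrange (by omega)).ge hx

end IsGalois

end

/-- **Every degree-`p` cyclic extension in characteristic `p` is Artin–Schreier.**
Let `K` be a field of characteristic `p > 0` and let `L/K` be a finite Galois extension of
degree `p`.  Then there exist `a ∈ K` and `α ∈ L` with `α^p - α = a` and `L = K(α)`;
that is, `L = K(℘⁻¹(a))` for some `a ∈ K`. -/
theorem cyclic_degree_p_extension_is_artin_schreier
    {K L : Type*} [Field K] [Field L] [Algebra K L]
    (p : ℕ) [hp : Fact p.Prime] [CharP K p]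
    [FiniteDimensional K L] [IsGalois K L]
    (hdeg : Module.finrank K L = p) :
    ∃ (a : K) (α : L), α ^ p - α = algebraMap K L a ∧
      IntermediateField.adjoin K ({α} : Set L) = ⊤ := by
  have : CharP L p := charP_of_injective_algebraMap (algebraMap K L).injective p
  have : IsCyclic Gal(L/K) := isCyclic_of_prime_card (by rw [IsGalois.card_aut_eq_finrank, hdeg])
  obtain ⟨σ, hσ⟩ := IsCyclic.exists_generator (α := Gal(L/K))
  have htrace_one : Algebra.trace K L 1 = 0 := by
    rw [← map_one (algebraMap K L), Algebra.trace_algebraMap, hdeg, nsmul_eq_mul,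
      CharP.cast_eq_zero, zero_mul]
  obtain ⟨α, hα⟩ := IsGalois.exists_apply_sub_self_eq_of_trace_eq_zero hσ htrace_one
  have hσα : σ α = α + 1 := by rw [← hα]; ring
  have hfixed : σ (α ^ p - α) = α ^ p - α := by
    rw [map_sub, map_pow, hσα, add_pow_char, one_pow]; ring
  have hmem_bot := IsGalois.mem_bot_iff_apply_eq_self_of_forall_mem_zpowers (K := K) hσ
  obtain ⟨a, ha⟩ := mem_bot.mp ((hmem_bot _).mpr hfixed)
  refine ⟨a, α, ha.symm, adjoin_simple_eq_top_of_finrank_prime (hdeg ▸ hp.out) ?_⟩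
  rw [hmem_bot, hσα]
  simp
end

section
/- Let p be a prime, q = p^f, and K = 𝔽_q((ϖ)) the field of formal Laurent series over the finite field 𝔽_q with q elements, equipped with its valuation topology. Then the image ℘(K) of the Artin–Schreier map is an open additive subgroup of K (it contains the maximal ideal 𝔭 of the valuation ring), and the quotient group K/℘(K) is annihilated by p (every element of K/℘(K) has additive order dividing p); in particular K/℘(K) is a discrete abelian torsion group. -/
/-!
For `g` in the maximal ideal of `F⟦X⟧`, the polynomial `T ^ p - T - g` has the root `0` modulo
`X`, and it is a simple root because the derivative is `-1`; since `F⟦X⟧` is `X`-adically complete,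
Hensel's lemma lifts it to a root in `F⟦X⟧`. Hence `℘(K)` contains the maximal ideal, which is a
neighbourhood of `0`, so the subgroup `℘(K)` is open. Finally `K` has characteristic `p`, so
`p • x = 0` for every `x`.
-/

open Polynomial in
theorem HenselianRing.exists_pow_sub_self_eq {R : Type*} [CommRing R] {I : Ideal R}
    [HenselianRing R I] {n : ℕ} (hn : 2 ≤ n) {g : R} (hg : g ∈ I) :
    ∃ y : R, y ^ n - y = g := by
  nontriviality R
  have hmonic : (X ^ n - (X + C g) : R[X]).Monic :=
    monic_X_pow_sub (by rw [degree_X_add_C]; exact_mod_cast hn)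
  obtain ⟨y, hy, -⟩ := HenselianRing.is_henselian (I := I) _ hmonic 0
    (by simpa [zero_pow (by omega : n ≠ 0)] using hg)
    (by simp [derivative_X_pow, zero_pow (by omega : n - 1 ≠ 0)])
  exact ⟨y, by simpa [sub_eq_zero, sub_add_eq_sub_sub] using hy⟩

theorem PowerSeries.exists_pow_sub_self_eq {R : Type*} [CommRing R] {n : ℕ} (hn : 2 ≤ n)
    {g : PowerSeries R} (hg : constantCoeff g = 0) : ∃ y : PowerSeries R, y ^ n - y = g :=
  HenselianRing.exists_pow_sub_self_eq (I := .span {X}) hn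
    (Ideal.mem_span_singleton.mpr (X_dvd_iff.mpr hg))

def artinSchreier (R : Type*) [CommRing R] (p : ℕ) [ExpChar R p] : R →+ R :=
  (frobenius R p).toAddMonoidHom - .id R

@[simp]
theorem artinSchreier_apply {R : Type*} [CommRing R] (p : ℕ) [ExpChar R p] (x : R) :
    artinSchreier R p x = x ^ p - x :=
  rfl

namespace LaurentSeries

variable {K : Type*} [Field K]

open WithZero in
theorem exists_coe_eq_of_valuation_lt_one {x : LaurentSeries K} (hx : Valued.v x < 1) :
    ∃ g : PowerSeries K, PowerSeries.constantCoeff g = 0 ∧ (g : LaurentSeries K) = x := by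
  have hx' : Valued.v x ≤ exp (-(1 : ℤ)) := by
    rwa [← lt_mul_exp_iff_le exp_ne_zero, ← exp_add, neg_add_cancel, exp_zero]
  obtain ⟨g, rfl⟩ := (val_le_one_iff_eq_coe K x).mp hx.le
  refine ⟨g, ?_, rfl⟩
  rw [← PowerSeries.coeff_zero_eq_constantCoeff_apply, ← coeff_coe_powerSeries]
  exact (valuation_le_iff_coeff_lt_eq_zero K).mp hx' 0 one_pos

variable (p : ℕ) [CharP K p]

instance : CharP (LaurentSeries K) p :=
  charP_of_injective_algebraMap (algebraMap K _).injective p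

variable [Fact p.Prime]

theorem coe_mem_range_artinSchreier {g : PowerSeries K} (hg : PowerSeries.constantCoeff g = 0) :
    (g : LaurentSeries K) ∈ (artinSchreier (LaurentSeries K) p).range := by
  obtain ⟨y, hy⟩ := PowerSeries.exists_pow_sub_self_eq (Fact.out : p.Prime).two_le hg
  exact ⟨y, by simp [← hy]⟩

theorem isOpen_range_artinSchreier :
    IsOpen ((artinSchreier (LaurentSeries K) p).range : Set (LaurentSeries K)) := by
  refine AddSubgroup.isOpen_of_mem_nhds _ (Valued.mem_nhds_zero.mpr ⟨1, fun x hx => ?_⟩)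
  obtain ⟨g, hg, rfl⟩ := exists_coe_eq_of_valuation_lt_one (by simpa using hx)
  exact coe_mem_range_artinSchreier p hg

end LaurentSeries

theorem artin_schreier_range_open_and_quotient_torsion_general
    (p f : ℕ) [hp : Fact p.Prime]
    (F : Type*) [Field F] [Fintype F] (hcard : Fintype.card F = p ^ f) :
    ∃ W : AddSubgroup (LaurentSeries F),
      (W : Set (LaurentSeries F)) = Set.range (fun y : LaurentSeries F => y ^ p - y) ∧
      IsOpen (W : Set (LaurentSeries F)) ∧
      (∀ g : PowerSeries F, PowerSeries.constantCoeff g = 0 →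
        (g : LaurentSeries F) ∈ W) ∧
      (∀ x : LaurentSeries F, p • x ∈ W) := by
  have : CharP F p := charP_of_card_eq_prime_pow hcard
  refine ⟨(artinSchreier (LaurentSeries F) p).range, ?_,
    LaurentSeries.isOpen_range_artinSchreier p,
    fun g hg => LaurentSeries.coe_mem_range_artinSchreier p hg, fun x => ?_⟩
  · ext
    simp
  · rw [nsmul_eq_mul, CharP.cast_eq_zero, zero_mul]
    exact zero_mem _

/-- **`℘(K)` is an open subgroup of `K = 𝔽_q((ϖ))` and `K/℘(K)` is killed by `p`.**
Let `p` be a prime, `q = p^f`, and `K = 𝔽_q((ϖ))` the field of formal Laurent series over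
the finite field with `q` elements, with its valuation topology.  Then the image
`℘(K) = {y^p - y : y ∈ K}` is an additive subgroup of `K` which is open (it contains the
maximal ideal `𝔭` of the valuation ring), and the quotient `K/℘(K)` is annihilated by `p`,
i.e. `p • x ∈ ℘(K)` for every `x ∈ K`; in particular `K/℘(K)` is a discrete abelian
torsion group. -/
theorem artin_schreier_range_open_and_quotient_torsion
    (p f : ℕ) [hp : Fact p.Prime] (hf : f ≠ 0)
    (F : Type*) [Field F] [Fintype F] (hcard : Fintype.card F = p ^ f) :
    ∃ W : AddSubgroup (LaurentSeries F),
      (W : Set (LaurentSeries F)) = Set.range (fun y : LaurentSeries F => y ^ p - y) ∧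
      IsOpen (W : Set (LaurentSeries F)) ∧
      (∀ g : PowerSeries F, PowerSeries.constantCoeff g = 0 →
        (g : LaurentSeries F) ∈ W) ∧
      (∀ x : LaurentSeries F, p • x ∈ W) :=
  artin_schreier_range_open_and_quotient_torsion_general p f (hp := hp) F hcard
end

section
/- Let p be a prime, q = p^f, and K = 𝔽_q((ϖ)) the field of formal Laurent series over the finite field 𝔽_q with q elements. Then there is a group isomorphism between the quotient K^×/(K^×)^p of the multiplicative group of K by its subgroup of p-th powers and the direct product ∏_{n∈ℕ} ℤ/pℤ of countably many copies of ℤ/pℤ. In particular K^×/(K^×)^p is an infinite abelian group annihilated by p. -/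
/-!
`K^×/(K^×)^p` is a commutative group of exponent `p`, hence an `𝔽_p`-vector space, and an
infinite vector space over a finite field is determined up to isomorphism by its cardinality.
As `K` embeds into `𝔽_q^ℤ`, the quotient has at most `𝔠` elements. Conversely, the units
`1 + y_s` with `y_s = ∑_{m ∈ s} ϖ^{pm+1}`, `s ⊆ ℕ`, are pairwise distinct modulo `p`-th
powers: in characteristic `p` a `p`-th power `g^p` only has exponents divisible by `p` (the
derivative of `g^p` vanishes), so sorting the coefficients of `g^p (1 + y_t) = 1 + y_s` by
exponent modulo `p` forces `g^p = 1` and `y_t = y_s`. So there are `2^ℵ₀ = 𝔠` classes, as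
many as elements of `∏_{n∈ℕ} ℤ/pℤ`.
-/

/-- Stated as an instance so that quotients of `(LaurentSeries F)ˣ` carry their group structure. -/
instance laurentSeries_units_subgroup_normal (F : Type*) [Field F]
    (P : Subgroup (LaurentSeries F)ˣ) : P.Normal :=
  Subgroup.normal_of_comm P

open Cardinal

universe u v

theorem PowerSeries.coeff_pow_eq_zero_of_not_dvd {R : Type*} [CommRing R] [NoZeroDivisors R]
    (p : ℕ) [CharP R p] (u : PowerSeries R) {m : ℕ} (hm : ¬ p ∣ m) :
    coeff m (u ^ p) = 0 := by
  obtain ⟨n, rfl⟩ : ∃ n, m = n + 1 :=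
    Nat.exists_eq_succ_of_ne_zero (by rintro rfl; exact hm (dvd_zero p))
  have hderiv : derivative R (u ^ p) = 0 := by
    rw [Derivation.leibniz_pow, nsmul_eq_mul, ← map_natCast (C (R := R)), CharP.cast_eq_zero,
      map_zero, zero_mul]
  have h := coeff_derivative (u ^ p) n
  rw [hderiv, map_zero, eq_comm, mul_eq_zero] at h
  exact h.resolve_right (by exact_mod_cast (CharP.cast_eq_zero_iff R p _).not.mpr hm)

namespace HahnSeries

section Fibers

variable {Γ R M : Type*} [AddCommMonoid Γ] [PartialOrder Γ] [IsOrderedCancelAddMonoid Γ]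
  [AddMonoid M] (f : Γ →+ M)

theorem support_mul_subset_preimage [Semiring R] {x y : HahnSeries Γ R} {i j : M}
    (hx : x.support ⊆ f ⁻¹' {i}) (hy : y.support ⊆ f ⁻¹' {j}) :
    (x * y).support ⊆ f ⁻¹' {i + j} := by
  refine support_mul_subset.trans ?_
  rintro _ ⟨a, ha, b, hb, rfl⟩
  exact (map_add f a b).trans (congrArg₂ (· + ·) (hx ha) (hy hb))

theorem eq_one_and_eq_of_mul_one_add_eq [Ring R] {j : M} (hj : j ≠ 0)
    {a b c : HahnSeries Γ R} (ha : a.support ⊆ f ⁻¹' {0}) (hb : b.support ⊆ f ⁻¹' {j})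
    (hc : c.support ⊆ f ⁻¹' {j}) (h : a * (1 + b) = 1 + c) : a = 1 ∧ b = c := by
  have coeff_eq_zero {x : HahnSeries Γ R} {k : M} (hx : x.support ⊆ f ⁻¹' {k}) {n : Γ}
      (hn : f n ≠ k) : x.coeff n = 0 :=
    not_not.mp fun h => hn (hx h)
  have hab : (a * b).support ⊆ f ⁻¹' {j} := by
    simpa using support_mul_subset_preimage f ha hb
  obtain rfl : a = 1 := by
    ext n
    have hn := congrArg (coeff · n) h
    simp only [mul_add, mul_one, coeff_add] at hn
    by_cases hfn : f n = 0
    · rwa [coeff_eq_zero hab (hfn ▸ hj.symm), coeff_eq_zero hc (hfn ▸ hj.symm), add_zero,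
        add_zero] at hn
    · rw [coeff_eq_zero ha hfn, coeff_one, if_neg (by rintro rfl; simp at hfn)]
  exact ⟨rfl, by simpa using h⟩

end Fibers

theorem mk_le_continuum {Γ : Type u} {R : Type v} [PartialOrder Γ] [Zero R] [Countable Γ]
    [Finite R] : #(HahnSeries Γ R) ≤ 𝔠 := by
  refine (mk_le_of_injective coeff_injective).trans ?_
  rw [mk_arrow, ← aleph0_power_aleph0]
  exact (power_le_power_right (lift_le_aleph0.mpr mk_le_aleph0)).trans
    (power_le_power_left aleph0_ne_zero (lift_le_aleph0.mpr mk_le_aleph0))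

end HahnSeries

namespace PowerSeries

variable (R : Type*) [Semiring R]

noncomputable def indicatorSeries (S : Set ℕ) : R⟦X⟧ :=
  mk (S.indicator 1)

variable {R}

@[simp]
theorem coeff_indicatorSeries (S : Set ℕ) (n : ℕ) :
    coeff n (indicatorSeries R S) = S.indicator 1 n :=
  coeff_mk _ _

theorem indicatorSeries_injective [Nontrivial R] : Function.Injective (indicatorSeries R) :=
  fun S T h => Set.indicator_one_inj R <| funext fun n => by
    rw [← coeff_indicatorSeries, h, coeff_indicatorSeries]

end PowerSeries

open PowerSeries

namespace LaurentSeries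

theorem support_pow_subset_preimage_zero {R : Type*} [CommRing R] [NoZeroDivisors R] (p : ℕ)
    [CharP R p] (g : R⸨X⸩) : (g ^ p).support ⊆ Int.castAddHom (ZMod p) ⁻¹' {0} := by
  intro n hn
  by_contra hpn
  simp only [Set.mem_preimage, Int.coe_castAddHom, Set.mem_singleton_iff,
    ZMod.intCast_zmod_eq_zero_iff_dvd] at hpn
  apply hn
  rw [← g.single_order_mul_powerSeriesPart, mul_pow, HahnSeries.single_pow, one_pow, ← map_pow,
    ← sub_add_cancel n (p • g.order), HahnSeries.coeff_single_mul_add, one_mul,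
    PowerSeries.coeff_coe]
  split_ifs
  · rfl
  · refine coeff_pow_eq_zero_of_not_dvd p _ fun hdvd => hpn ?_
    have h := (Int.natCast_dvd.mpr hdvd).add (dvd_mul_right (p : ℤ) g.order)
    rwa [← nsmul_eq_mul, sub_add_cancel] at h

theorem support_coe_indicatorSeries_subset {R : Type*} [Semiring R] (S : Set ℕ) :
    (indicatorSeries R S : R⸨X⸩).support ⊆ (↑) '' S := by
  intro n hn
  rw [HahnSeries.mem_support, PowerSeries.coeff_coe] at hn
  split_ifs at hn with hneg
  · exact absurd rfl hn
  · refine ⟨n.natAbs, ?_, by omega⟩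
    by_contra hS
    simp [hS] at hn

section ProgressionUnit

variable (R : Type*) [CommRing R] (p : ℕ)

noncomputable def progressionUnit (s : Set ℕ) : R⸨X⸩ˣ :=
  (isUnit_iff_constantCoeff.mpr (by
      rw [map_add, map_one, ← coeff_zero_eq_constantCoeff_apply, coeff_indicatorSeries,
        Set.indicator_of_notMem (by simp)]
      simp) :
    IsUnit (1 + indicatorSeries R ((p * · + 1) '' s))).map (HahnSeries.ofPowerSeries ℤ R) |>.unit

variable {R p}

theorem coe_progressionUnit (s : Set ℕ) :
    (progressionUnit R p s : R⸨X⸩) = 1 + indicatorSeries R ((p * · + 1) '' s) := by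
  simp [progressionUnit]

theorem support_coe_indicatorSeries_progression_subset (s : Set ℕ) :
    (indicatorSeries R ((p * · + 1) '' s) : R⸨X⸩).support ⊆
      Int.castAddHom (ZMod p) ⁻¹' {1} := by
  refine (support_coe_indicatorSeries_subset _).trans ?_
  rintro _ ⟨_, ⟨m, -, rfl⟩, rfl⟩
  simp

theorem mk_progressionUnit_injective [IsDomain R] [Fact p.Prime] [CharP R p] :
    Function.Injective fun s : Set ℕ =>
      (progressionUnit R p s : R⸨X⸩ˣ ⧸ (powMonoidHom p).range) := by
  intro s t hst
  obtain ⟨g, hg⟩ := QuotientGroup.eq.mp hst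
  simp only [powMonoidHom_apply] at hg
  have key : (g : R⸨X⸩) ^ p * (1 + indicatorSeries R ((p * · + 1) '' s)) =
      1 + indicatorSeries R ((p * · + 1) '' t) := by
    rw [← coe_progressionUnit, ← coe_progressionUnit, ← Units.val_pow_eq_pow_val,
      ← Units.val_mul, hg, mul_comm, mul_inv_cancel_left]
  have hst := (HahnSeries.eq_one_and_eq_of_mul_one_add_eq _ one_ne_zero
    (support_pow_subset_preimage_zero p _) (support_coe_indicatorSeries_progression_subset s)
    (support_coe_indicatorSeries_progression_subset t) key).2
  exact Set.image_injective.mpr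
    (fun a b h => Nat.eq_of_mul_eq_mul_left (Fact.out : p.Prime).pos (Nat.succ_injective h))
    (indicatorSeries_injective (HahnSeries.ofPowerSeries_injective hst))

end ProgressionUnit

end LaurentSeries

theorem rank_eq_mk_of_finite_of_infinite {K : Type u} {V : Type v} [DivisionRing K] [Finite K]
    [AddCommGroup V] [Module K V] [Infinite V] : Module.rank K V = #V := by
  have hrank : ℵ₀ ≤ Module.rank K V := by
    by_contra! h
    have := Module.rank_lt_aleph0_iff.mp h
    have := Module.finite_of_finite K (M := V)
    exact not_finite V
  have : Infinite (Module.Free.ChooseBasisIndex K V) := by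
    rw [Cardinal.infinite_iff, ← Module.Free.rank_eq_card_chooseBasisIndex]
    exact hrank
  have h := lift_mk_eq'.mpr ⟨(Module.Free.chooseBasis K V).repr.toEquiv⟩
  simp only [mk_finsupp_lift_of_infinite, ← Module.Free.rank_eq_card_chooseBasisIndex, lift_max,
    lift_lift] at h
  rw [max_eq_left ((lift_lt_aleph0.mpr (lt_aleph0_of_finite K)).le.trans
    (aleph0_le_lift.mpr hrank))] at h
  exact (lift_inj.mp h).symm

theorem nonempty_mulEquiv_of_pow_eq_one {G : Type u} {H : Type v} [CommGroup G] [CommGroup H]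
    (p : ℕ) [Fact p.Prime] (hG : ∀ x : G, x ^ p = 1) (hH : ∀ x : H, x ^ p = 1) [Infinite G]
    (hcard : lift.{v} #G = lift.{u} #H) : Nonempty (G ≃* H) := by
  let _ := AddCommGroup.zmodModule (G := Additive G) (n := p) hG
  let _ := AddCommGroup.zmodModule (G := Additive H) (n := p) hH
  have : Infinite H :=
    infinite_iff.mpr <| aleph0_le_lift.mp <| hcard ▸ aleph0_le_lift.mpr (infinite_iff.mp ‹_›)
  obtain ⟨e⟩ := nonempty_linearEquiv_of_lift_rank_eq (R := ZMod p) (M := Additive G)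
    (M' := Additive H) (by rwa [rank_eq_mk_of_finite_of_infinite, rank_eq_mk_of_finite_of_infinite])
  exact ⟨MulEquiv.toAdditive.symm e.toAddEquiv⟩

theorem units_mod_pth_powers_iso_prod_general
    (p f : ℕ) [hp : Fact p.Prime]
    (F : Type*) [Field F] [Fintype F] (hcard : Fintype.card F = p ^ f)
    (P : Subgroup (LaurentSeries F)ˣ)
    (hP : ∀ x : (LaurentSeries F)ˣ, x ∈ P ↔ ∃ y : (LaurentSeries F)ˣ, y ^ p = x) :
    Nonempty (((LaurentSeries F)ˣ ⧸ P) ≃* (ℕ → Multiplicative (ZMod p))) ∧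
    Infinite ((LaurentSeries F)ˣ ⧸ P) ∧
    (∀ x : (LaurentSeries F)ˣ ⧸ P, x ^ p = 1) := by
  have : CharP F p := charP_of_card_eq_prime_pow hcard
  obtain rfl : P = (powMonoidHom p).range := Subgroup.ext fun x => (hP x).trans (by simp)
  have hpow (x : (LaurentSeries F)ˣ ⧸ (powMonoidHom p).range) : x ^ p = 1 :=
    QuotientGroup.induction_on x fun u => (QuotientGroup.eq_one_iff _).mpr ⟨u, rfl⟩
  have hcardQ : #((LaurentSeries F)ˣ ⧸ (powMonoidHom p).range) = 𝔠 := le_antisymm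
    ((mk_le_of_surjective QuotientGroup.mk_surjective).trans <|
      (mk_le_of_injective Units.val_injective).trans HahnSeries.mk_le_continuum)
    (by simpa using
      lift_mk_le'.mpr ⟨⟨_, LaurentSeries.mk_progressionUnit_injective (R := F) (p := p)⟩⟩)
  have hinf : Infinite ((LaurentSeries F)ˣ ⧸ (powMonoidHom p).range) :=
    infinite_iff.mpr (hcardQ ▸ aleph0_le_continuum)
  have hpowH (x : ℕ → Multiplicative (ZMod p)) : x ^ p = 1 :=
    funext fun n => by simpa using pow_card_eq_one' (x := x n)
  have hcard_eq : lift.{0} #((LaurentSeries F)ˣ ⧸ (powMonoidHom p).range) =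
      lift #(ℕ → Multiplicative (ZMod p)) := by
    simp [hcardQ, nat_power_aleph0 hp.out.two_le]
  exact ⟨nonempty_mulEquiv_of_pow_eq_one p hpow hpowH hcard_eq, hinf, hpow⟩

/-- **`K^×/(K^×)^p ≅ ∏_{n∈ℕ} ℤ/pℤ` for `K = 𝔽_q((ϖ))`.**
Let `p` be a prime, `q = p^f`, and `K = 𝔽_q((ϖ))` the field of formal Laurent series over
the finite field with `q` elements.  Then the quotient of `K^×` by its subgroup `P` of
`p`-th powers is isomorphic, as a group, to the direct product of countably many copies of
`ℤ/pℤ`; in particular it is an infinite abelian group annihilated by `p`. -/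
theorem units_mod_pth_powers_iso_prod
    (p f : ℕ) [hp : Fact p.Prime] (hf : f ≠ 0)
    (F : Type*) [Field F] [Fintype F] (hcard : Fintype.card F = p ^ f)
    (P : Subgroup (LaurentSeries F)ˣ)
    (hP : ∀ x : (LaurentSeries F)ˣ, x ∈ P ↔ ∃ y : (LaurentSeries F)ˣ, y ^ p = x) :
    Nonempty (((LaurentSeries F)ˣ ⧸ P) ≃* (ℕ → Multiplicative (ZMod p))) ∧
    Infinite ((LaurentSeries F)ˣ ⧸ P) ∧
    (∀ x : (LaurentSeries F)ˣ ⧸ P, x ^ p = 1) :=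
  units_mod_pth_powers_iso_prod_general p f (hp := hp) F hcard P hP
end

section
/- Let q = 2^f and K = 𝔽_q((ϖ)) the field of formal Laurent series over the finite field 𝔽_q with q elements, with ring of integers 𝔬 and maximal ideal 𝔭. For every integer i ≥ 0, the quotient group (𝔭^{−(2i+1)} + ℘(K)) / (𝔭^{−2i} + ℘(K)) has exactly q elements (here 𝔭^0 = 𝔬); that is, each step V_{2i} ⊂ V_{2i+1} of the filtration of K/℘(K) by images of the fractional ideals 𝔭^{−n} has 𝔽₂-codimension f. -/
/-!
For `e = -(2i+1)`, `a ↦ a ϖ^e` induces a bijection from `𝔽_q` onto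
`(𝔭^e + ℘(K)) / (𝔭^{e+1} + ℘(K))`. It is onto because an element of `𝔭^e` differs from its
degree-`e` term by an element of `𝔭^{e+1}`. It is injective because a nonzero `a ϖ^e + 𝔭^{e+1}`
contains no `y² - y`: the order of `y² - y` is `2 ord(y)` when `ord(y) < 0` and nonnegative
otherwise, so it is never the odd negative number `e`.
-/

open HahnSeries

namespace LaurentSeries

theorem orderTop_sq_sub_self_ne {R : Type*} [Ring R] [NoZeroDivisors R] (y : LaurentSeries R)
    {e : ℤ} (he : Odd e) (he₀ : e < 0) : (y ^ 2 - y).orderTop ≠ e := by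
  have hsq : (y ^ 2).orderTop = y.orderTop + y.orderTop := by rw [pow_two, orderTop_mul]
  rcases lt_or_ge y.orderTop 0 with hneg | hnonneg
  · obtain ⟨d, hd⟩ := WithTop.ne_top_iff_exists.mp hneg.ne_top
    have hd₀ : d < 0 := by rw [← hd] at hneg; exact_mod_cast hneg
    rw [orderTop_sub (by rw [hsq, ← hd]; norm_cast; omega), hsq, ← hd]
    norm_cast
    rintro rfl
    exact Int.not_odd_iff_even.mpr ⟨d, rfl⟩ he
  · have h₀ : 0 ≤ (y ^ 2 - y).orderTop :=
      (le_min (hsq ▸ add_nonneg hnonneg hnonneg) hnonneg).trans min_orderTop_le_orderTop_sub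
    intro h
    rw [h] at h₀
    exact absurd (WithTop.coe_le_coe.mp h₀) (not_le.mpr he₀)

section Filtration

variable {R : Type*} [AddCommGroup R]

/-- The fractional ideal `𝔭^e = ϖ^e 𝔬` when `R` is a field. -/
def coeffZeroBelow (e : ℤ) : AddSubgroup (LaurentSeries R) where
  carrier := {x | ∀ m : ℤ, m < e → x.coeff m = 0}
  add_mem' hx hy m hm := by rw [coeff_add, hx m hm, hy m hm, add_zero]
  zero_mem' _ _ := coeff_zero
  neg_mem' hx m hm := by rw [coeff_neg, hx m hm, neg_zero]

theorem mem_coeffZeroBelow_iff_le_orderTop {e : ℤ} {x : LaurentSeries R} :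
    x ∈ coeffZeroBelow e ↔ (e : WithTop ℤ) ≤ x.orderTop := by
  rw [le_orderTop_iff_forall]
  exact forall_congr' fun m => by rw [WithTop.coe_lt_coe]

theorem single_mem_coeffZeroBelow (e : ℤ) (a : R) : single e a ∈ coeffZeroBelow e :=
  mem_coeffZeroBelow_iff_le_orderTop.mpr orderTop_single_le

theorem sub_single_coeff_mem_coeffZeroBelow {e : ℤ} {x : LaurentSeries R}
    (hx : x ∈ coeffZeroBelow e) : x - single e (x.coeff e) ∈ coeffZeroBelow (e + 1) := by
  intro m hm
  rw [coeff_sub]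
  rcases (Int.lt_add_one_iff.mp hm).lt_or_eq with hlt | rfl
  · rw [hx m hlt, coeff_single_of_ne hlt.ne, sub_zero]
  · rw [coeff_single_same, sub_self]

variable (e : ℤ) (W : AddSubgroup (LaurentSeries R))

abbrev filtrationStep : Type _ :=
  ↥(coeffZeroBelow e ⊔ W) ⧸ (coeffZeroBelow (e + 1) ⊔ W).addSubgroupOf (coeffZeroBelow e ⊔ W)

noncomputable def singleToFiltrationStep : R →+ filtrationStep e W :=
  (QuotientAddGroup.mk' _).comp <| (single.addMonoidHom e).codRestrict _ fun a =>
    AddSubgroup.mem_sup_left (single_mem_coeffZeroBelow e a)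

theorem singleToFiltrationStep_surjective : Function.Surjective (singleToFiltrationStep e W) := by
  rintro ⟨g, hg⟩
  obtain ⟨v, hv, w, hw, rfl⟩ := AddSubgroup.mem_sup.mp hg
  refine ⟨v.coeff e, QuotientAddGroup.eq_iff_sub_mem.mpr ?_⟩
  change single e (v.coeff e) - (v + w) ∈ coeffZeroBelow (e + 1) ⊔ W
  rw [show single e (v.coeff e) - (v + w) = -((v - single e (v.coeff e)) + w) by abel]
  exact neg_mem (add_mem (AddSubgroup.mem_sup_left (sub_single_coeff_mem_coeffZeroBelow hv))
    (AddSubgroup.mem_sup_right hw))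

theorem singleToFiltrationStep_injective (hW : ∀ w ∈ W, w.orderTop ≠ e) :
    Function.Injective (singleToFiltrationStep e W) := by
  refine (injective_iff_map_eq_zero _).mpr fun a ha => ?_
  have hmem := (QuotientAddGroup.eq_zero_iff _).mp ha
  replace hmem : single e a ∈ coeffZeroBelow (e + 1) ⊔ W := hmem
  obtain ⟨v, hv, w, hw, hvw⟩ := AddSubgroup.mem_sup.mp hmem
  by_contra ha₀
  have hev : (e : WithTop ℤ) < v.orderTop :=
    (WithTop.coe_lt_coe.mpr (lt_add_one e)).trans_le (mem_coeffZeroBelow_iff_le_orderTop.mp hv)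
  refine hW w hw ?_
  rw [eq_sub_of_add_eq' hvw, orderTop_sub ((orderTop_single ha₀).trans_lt hev),
    orderTop_single ha₀]

theorem card_filtrationStep (hW : ∀ w ∈ W, w.orderTop ≠ e) :
    Nat.card (filtrationStep e W) = Nat.card R :=
  (Nat.card_eq_of_bijective _
    ⟨singleToFiltrationStep_injective e W hW, singleToFiltrationStep_surjective e W⟩).symm

end Filtration

end LaurentSeries

theorem filtration_odd_step_card_general
    (f : ℕ)
    (F : Type*) [Field F] [Fintype F] (hcard : Fintype.card F = 2 ^ f)
    (W : AddSubgroup (LaurentSeries F))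
    (hW : (W : Set (LaurentSeries F)) = Set.range (fun y : LaurentSeries F => y ^ 2 - y))
    (V : ℕ → AddSubgroup (LaurentSeries F))
    (hV : ∀ n : ℕ, (V n : Set (LaurentSeries F)) =
      {x : LaurentSeries F | ∀ m : ℤ, m < -(n : ℤ) → x.coeff m = 0}) :
    ∀ i : ℕ,
      Nat.card (↥(V (2 * i + 1) ⊔ W) ⧸ (V (2 * i) ⊔ W).addSubgroupOf (V (2 * i + 1) ⊔ W))
        = 2 ^ f := by
  intro i
  have hV_eq : ∀ n : ℕ, V n = LaurentSeries.coeffZeroBelow (-(n : ℤ)) :=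
    fun n => SetLike.coe_injective (hV n)
  have hW_ne : ∀ w ∈ W, w.orderTop ≠ (-(2 * i + 1 : ℕ) : ℤ) := by
    intro w hw
    obtain ⟨y, rfl⟩ : w ∈ Set.range (fun y : LaurentSeries F => y ^ 2 - y) := hW ▸ hw
    exact LaurentSeries.orderTop_sq_sub_self_ne y ⟨-(i : ℤ) - 1, by push_cast; ring⟩ (by omega)
  have hsucc : (-(2 * i + 1 : ℕ) : ℤ) + 1 = -(2 * i : ℕ) := by push_cast; ring
  rw [hV_eq, hV_eq, ← hsucc, ← Nat.card_eq_fintype_card.trans hcard]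
  exact LaurentSeries.card_filtrationStep _ W hW_ne

/-- **Each odd step of the filtration of `K/℘(K)` has index `q`, for `K = 𝔽_q((ϖ))`, `q = 2^f`.**
Let `K = 𝔽_q((ϖ))` with `q = 2^f`, let `W = ℘(K) = {y² - y : y ∈ K}` and, for `n ∈ ℕ`, let
`V n` be the additive subgroup `𝔭^{-n} = ϖ^{-n}𝔬` of `K`, consisting of Laurent series
whose coefficients vanish in degrees `< -n`.  Then for every `i ≥ 0` the quotient
`(𝔭^{-(2i+1)} + ℘(K)) / (𝔭^{-2i} + ℘(K))` has exactly `q = 2^f` elements; i.e. each step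
`V_{2i} ⊂ V_{2i+1}` of the filtration of `K/℘(K)` has `𝔽₂`-codimension `f`. -/
theorem filtration_odd_step_card
    (f : ℕ) (hf : f ≠ 0)
    (F : Type*) [Field F] [Fintype F] (hcard : Fintype.card F = 2 ^ f)
    (W : AddSubgroup (LaurentSeries F))
    (hW : (W : Set (LaurentSeries F)) = Set.range (fun y : LaurentSeries F => y ^ 2 - y))
    (V : ℕ → AddSubgroup (LaurentSeries F))
    (hV : ∀ n : ℕ, (V n : Set (LaurentSeries F)) =
      {x : LaurentSeries F | ∀ m : ℤ, m < -(n : ℤ) → x.coeff m = 0}) :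
    ∀ i : ℕ,
      Nat.card (↥(V (2 * i + 1) ⊔ W) ⧸ (V (2 * i) ⊔ W).addSubgroupOf (V (2 * i + 1) ⊔ W))
        = 2 ^ f :=
  filtration_odd_step_card_general f F hcard W hW V hV
end
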